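/- Let G be a finite simple graph and let M̂ be the Gram matrix of an optimal vector coloring of G having the maximum possible rank among all optimal vector colorings. Then im(M) ⊆ im(M̂) for the Gram matrix M of every optimal vector coloring of G. -/

import Mathlib

open Matrix Kronecker

noncomputable section VectorColoring

variable {V α β : Type*}

/-- A vector `t`-coloring of a graph `G`: vectors `p i` with `p i ⬝ᵥ p i = t - 1`
and `p i ⬝ᵥ p j ≤ -1` on edges. -/
def IsVecColoring [Fintype V] (G : SimpleGraph V) (t : ℝ) {d : ℕ}
    (p : V → Fin d → ℝ) : Prop :=
  (∀ i, p i ⬝ᵥ p i = t - 1) ∧ ∀ i j, G.Adj i j → p i ⬝ᵥ p j ≤ -1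

/-- The vector chromatic number: the least `t ≥ 1` admitting a vector `t`-coloring. -/
def vecChrom [Fintype V] (G : SimpleGraph V) : ℝ :=
  sInf {t : ℝ | 1 ≤ t ∧ ∃ (d : ℕ) (p : V → Fin d → ℝ), IsVecColoring G t p}

/-- A strict vector `t`-coloring: `p i ⬝ᵥ p j = -1` on edges. -/
def IsStrictVecColoring [Fintype V] (G : SimpleGraph V) (t : ℝ) {d : ℕ}
    (p : V → Fin d → ℝ) : Prop :=
  (∀ i, p i ⬝ᵥ p i = t - 1) ∧ ∀ i j, G.Adj i j → p i ⬝ᵥ p j = -1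

/-- The strict vector chromatic number. -/
def strictVecChrom [Fintype V] (G : SimpleGraph V) : ℝ :=
  sInf {t : ℝ | 1 ≤ t ∧ ∃ (d : ℕ) (p : V → Fin d → ℝ), IsStrictVecColoring G t p}

/-- The Gram matrix of a family of vectors. -/
def gramMat {d : ℕ} (p : V → Fin d → ℝ) : Matrix V V ℝ :=
  Matrix.of fun i j => p i ⬝ᵥ p j

/-- `M` is the Gram matrix of an optimal vector coloring of `G`. -/
def IsOptGram [Fintype V] (G : SimpleGraph V) (M : Matrix V V ℝ) : Prop :=
  ∃ (d : ℕ) (p : V → Fin d → ℝ), IsVecColoring G (vecChrom G) p ∧ M = gramMat p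

/-- `grk G = rk(G)`: the maximum rank of the Gram matrix of an optimal vector coloring. -/
def grk [Fintype V] (G : SimpleGraph V) : ℕ :=
  sSup {r : ℕ | ∃ M : Matrix V V ℝ, IsOptGram G M ∧ M.rank = r}

/-- The categorical (tensor) product of graphs. -/
def catProd (G : SimpleGraph α) (H : SimpleGraph β) : SimpleGraph (α × β) where
  Adj x y := G.Adj x.1 y.1 ∧ H.Adj x.2 y.2
  symm := by constructor; intro x y hxy; exact ⟨hxy.1.symm, hxy.2.symm⟩
  loopless := by constructor; intro x hx; exact G.irrefl hx.1

/-- A feasible dual solution for `vecChrom G`. -/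
def IsDualSol [Fintype V] (G : SimpleGraph V) (B : Matrix V V ℝ) : Prop :=
  B.PosSemidef ∧ (∀ i j, i ≠ j → ¬ G.Adj i j → B i j = 0) ∧
    (∀ i j, 0 ≤ B i j) ∧ B.trace = 1

/-- An optimal dual solution for `vecChrom G`: feasible with objective value `vecChrom G`. -/
def IsOptDual [Fintype V] (G : SimpleGraph V) (B : Matrix V V ℝ) : Prop :=
  IsDualSol G B ∧ (∑ i, ∑ j, B i j) = vecChrom G

/-- The all-ones matrix `J`. -/
def allOnes (γ : Type*) : Matrix γ γ ℝ :=
  Matrix.of fun _ _ => 1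

/-- The graph `G(B)` of a (symmetric) matrix `B`: distinct `i, j` adjacent iff `B i j ≠ 0`. -/
def matGraph (B : Matrix V V ℝ) : SimpleGraph V where
  Adj i j := i ≠ j ∧ B i j ≠ 0 ∧ B j i ≠ 0
  symm := by constructor; intro i j hij; exact ⟨hij.1.symm, hij.2.2, hij.2.1⟩
  loopless := by constructor; intro i hi; exact hi.1 rfl

/-- The spanning subgraph `G^p` of edges tight in the vector coloring `p`. -/
def tightSub [Fintype V] (G : SimpleGraph V) {d : ℕ} (p : V → Fin d → ℝ) :
    SimpleGraph V where
  Adj i j := G.Adj i j ∧ p i ⬝ᵥ p j = -1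
  symm := by
    constructor
    intro i j hij
    exact ⟨hij.1.symm, by rw [dotProduct_comm]; exact hij.2⟩
  loopless := by constructor; intro i hi; exact G.irrefl hi.1

/-- The skeleton `G^sk`: the spanning subgraph of edges tight in every optimal
vector coloring. -/
def skeleton [Fintype V] (G : SimpleGraph V) : SimpleGraph V where
  Adj i j := G.Adj i j ∧ ∀ (d : ℕ) (p : V → Fin d → ℝ),
      IsVecColoring G (vecChrom G) p → p i ⬝ᵥ p j = -1
  symm := by
    constructor
    intro i j hij
    refine ⟨hij.1.symm, fun d p hp => ?_⟩
    rw [dotProduct_comm]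
    exact hij.2 d p hp
  loopless := by constructor; intro i hi; exact G.irrefl hi.1

/-- `i` is neighborly in the vector coloring `p`: `-p i` lies in the conical hull of
the vectors of the `∼_p`-neighbours of `i`. -/
def NeighborlyIn [Fintype V] (G : SimpleGraph V) {d : ℕ} (p : V → Fin d → ℝ)
    (i : V) : Prop :=
  ∃ c : V → ℝ, (∀ j, 0 ≤ c j) ∧ (∀ j, c j ≠ 0 → G.Adj i j ∧ p i ⬝ᵥ p j = -1) ∧
    -p i = ∑ j, c j • p j

/-- `i` is neighborly: neighborly in every optimal vector coloring. -/
def Neighborly [Fintype V] (G : SimpleGraph V) (i : V) : Prop :=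
  ∀ (d : ℕ) (p : V → Fin d → ℝ), IsVecColoring G (vecChrom G) p → NeighborlyIn G p i

/-- `i →_p j`: `-p i = ∑ α_l • p l` over `∼_p`-neighbours `l` of `i`, with `α_j > 0`. -/
def ArrowIn [Fintype V] (G : SimpleGraph V) {d : ℕ} (p : V → Fin d → ℝ)
    (i j : V) : Prop :=
  ∃ c : V → ℝ, (∀ l, 0 ≤ c l) ∧ (∀ l, c l ≠ 0 → G.Adj i l ∧ p i ⬝ᵥ p l = -1) ∧
    0 < c j ∧ -p i = ∑ l, c l • p l

/-- `μ` is an eigenvalue of `M`. -/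
def IsEigenvalue [Fintype V] (M : Matrix V V ℝ) (μ : ℝ) : Prop :=
  ∃ v : V → ℝ, v ≠ 0 ∧ M *ᵥ v = μ • v

/-- `lam` is the largest eigenvalue of `M`. -/
def IsMaxEigenvalue [Fintype V] (M : Matrix V V ℝ) (lam : ℝ) : Prop :=
  IsGreatest {μ : ℝ | IsEigenvalue M μ} lam

/-- `lam` is the smallest eigenvalue of `M`. -/
def IsMinEigenvalue [Fintype V] (M : Matrix V V ℝ) (lam : ℝ) : Prop :=
  IsLeast {μ : ℝ | IsEigenvalue M μ} lam

/-- The eigenspace of `M` for `μ`. -/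
def eigSpace [Fintype V] (M : Matrix V V ℝ) (μ : ℝ) : Submodule ℝ (V → ℝ) :=
  LinearMap.ker (M.mulVecLin - μ • (LinearMap.id : (V → ℝ) →ₗ[ℝ] V → ℝ))

/-- `W` is (the Gram matrix of) a convex combination of vector colorings of `G × H`
induced by `G` and by `H`: `W = a • (M ⊗ J) + b • (J ⊗ N)`. -/
def IsConvexCombInduced [Fintype α] [Fintype β] (G : SimpleGraph α) (H : SimpleGraph β)
    (W : Matrix (α × β) (α × β) ℝ) : Prop :=
  ∃ (a b : ℝ) (M : Matrix α α ℝ) (N : Matrix β β ℝ),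
    0 ≤ a ∧ 0 ≤ b ∧ a + b = 1 ∧ IsOptGram G M ∧ IsOptGram H N ∧
    W = a • (M ⊗ₖ allOnes β) + b • (allOnes α ⊗ₖ N)

end VectorColoring

/-!
Optimal Gram matrices form a convex set: stacking `√a • p` on top of `√b • p'` turns two optimal
vector colorings into one with Gram matrix `a • M + b • M'`. For positive semidefinite matrices
`ker (M + M') = ker M ⊓ ker M'`, so the average `N` of `M` and `M̂` has `ker N ≤ ker M̂`, while
maximality of the rank of `M̂` gives `dim ker N ≥ dim ker M̂`; hence `ker M̂ = ker N ≤ ker M`.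
As `M` and `M̂` are symmetric, their images are the orthogonal complements of their kernels.
-/

theorem Fin.append_dotProduct_append {R : Type*} [Semiring R] {m n : ℕ}
    (u₁ u₂ : Fin m → R) (v₁ v₂ : Fin n → R) :
    Fin.append u₁ v₁ ⬝ᵥ Fin.append u₂ v₂ = u₁ ⬝ᵥ u₂ + v₁ ⬝ᵥ v₂ := by
  simp [dotProduct, Fin.sum_univ_add]

theorem sqrt_smul_dotProduct_sqrt_smul {n : Type*} [Fintype n] {a : ℝ} (ha : 0 ≤ a)
    (u v : n → ℝ) : (√a • u) ⬝ᵥ (√a • v) = a * (u ⬝ᵥ v) := by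
  rw [smul_dotProduct, dotProduct_smul, smul_eq_mul, smul_eq_mul, ← mul_assoc,
    Real.mul_self_sqrt ha]

theorem LinearMap.IsSymmetric.range_le_range_of_ker_le {𝕜 E : Type*} [RCLike 𝕜]
    [NormedAddCommGroup E] [InnerProductSpace 𝕜 E] [FiniteDimensional 𝕜 E]
    {S T : E →ₗ[𝕜] E} (hS : S.IsSymmetric) (hT : T.IsSymmetric)
    (h : LinearMap.ker T ≤ LinearMap.ker S) : LinearMap.range S ≤ LinearMap.range T := by
  rw [← (LinearMap.range S).orthogonal_orthogonal, ← (LinearMap.range T).orthogonal_orthogonal,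
    hS.orthogonal_range, hT.orthogonal_range]
  exact Submodule.orthogonal_le h

theorem Matrix.IsHermitian.range_mulVecLin_le_of_ker_le {n 𝕜 : Type*} [Fintype n] [RCLike 𝕜]
    {A B : Matrix n n 𝕜} (hA : A.IsHermitian) (hB : B.IsHermitian)
    (h : LinearMap.ker B.mulVecLin ≤ LinearMap.ker A.mulVecLin) :
    LinearMap.range A.mulVecLin ≤ LinearMap.range B.mulVecLin := by
  classical
  rintro _ ⟨x, rfl⟩
  have hker : LinearMap.ker B.toEuclideanLin ≤ LinearMap.ker A.toEuclideanLin := fun z hz ↦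
    congrArg (WithLp.toLp 2) (h (congrArg WithLp.ofLp hz))
  obtain ⟨y, hy⟩ := (isSymmetric_toEuclideanLin_iff.mpr hA).range_le_range_of_ker_le
    (isSymmetric_toEuclideanLin_iff.mpr hB) hker ⟨WithLp.toLp 2 x, rfl⟩
  exact ⟨WithLp.ofLp y, congrArg WithLp.ofLp hy⟩

theorem LinearMap.ker_eq_of_ker_le_of_finrank_range_le {K X Y Z : Type*} [DivisionRing K]
    [AddCommGroup X] [Module K X] [FiniteDimensional K X] [AddCommGroup Y] [Module K Y]
    [AddCommGroup Z] [Module K Z] {f : X →ₗ[K] Y} {g : X →ₗ[K] Z}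
    (h : LinearMap.ker f ≤ LinearMap.ker g)
    (hr : Module.finrank K (LinearMap.range f) ≤ Module.finrank K (LinearMap.range g)) :
    LinearMap.ker f = LinearMap.ker g := by
  refine Submodule.eq_of_le_of_finrank_le h ?_
  have := f.finrank_range_add_finrank_ker
  have := g.finrank_range_add_finrank_ker
  omega

open scoped ComplexOrder in
theorem Matrix.PosSemidef.ker_smul_add_smul {n 𝕜 : Type*} [Fintype n] [RCLike 𝕜]
    {A B : Matrix n n 𝕜} (hA : A.PosSemidef) (hB : B.PosSemidef) {a b : ℝ} (ha : 0 < a)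
    (hb : 0 < b) :
    LinearMap.ker (a • A + b • B).mulVecLin =
      LinearMap.ker A.mulVecLin ⊓ LinearMap.ker B.mulVecLin := by
  ext x
  simp only [Submodule.mem_inf, LinearMap.mem_ker, mulVecLin_apply]
  refine ⟨fun hx ↦ ?_, fun ⟨hAx, hBx⟩ ↦ by simp [add_mulVec, smul_mulVec, hAx, hBx]⟩
  have hsum : a • (star x ⬝ᵥ A *ᵥ x) + b • (star x ⬝ᵥ B *ᵥ x) = 0 := by
    simpa [add_mulVec, smul_mulVec, dotProduct_add, dotProduct_smul] using
      congrArg (star x ⬝ᵥ ·) hx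
  obtain ⟨hAx, hBx⟩ := (add_eq_zero_iff_of_nonneg
    (smul_nonneg ha.le (hA.dotProduct_mulVec_nonneg x))
    (smul_nonneg hb.le (hB.dotProduct_mulVec_nonneg x))).mp hsum
  exact ⟨(hA.dotProduct_mulVec_zero_iff x).mp ((smul_eq_zero.mp hAx).resolve_left ha.ne'),
    (hB.dotProduct_mulVec_zero_iff x).mp ((smul_eq_zero.mp hBx).resolve_left hb.ne')⟩

section VectorColoring

variable {V : Type*}

theorem gramMat_eq_transpose_mul_self {d : ℕ} (p : V → Fin d → ℝ) :
    gramMat p = (of fun k i ↦ p i k)ᵀ * of fun k i ↦ p i k := by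
  ext i j
  simp [gramMat, mul_apply, dotProduct]

noncomputable def stackScaled {d e : ℕ} (a b : ℝ) (p : V → Fin d → ℝ) (q : V → Fin e → ℝ) :
    V → Fin (d + e) → ℝ :=
  fun i ↦ Fin.append (√a • p i) (√b • q i)

theorem stackScaled_dotProduct {d e : ℕ} {a b : ℝ} (ha : 0 ≤ a) (hb : 0 ≤ b)
    (p : V → Fin d → ℝ) (q : V → Fin e → ℝ) (i j : V) :
    stackScaled a b p q i ⬝ᵥ stackScaled a b p q j = a * (p i ⬝ᵥ p j) + b * (q i ⬝ᵥ q j) := by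
  rw [stackScaled, stackScaled, Fin.append_dotProduct_append, sqrt_smul_dotProduct_sqrt_smul ha,
    sqrt_smul_dotProduct_sqrt_smul hb]

variable [Fintype V] {G : SimpleGraph V}

theorem posSemidef_gramMat {d : ℕ} (p : V → Fin d → ℝ) : (gramMat p).PosSemidef := by
  rw [gramMat_eq_transpose_mul_self, ← conjTranspose_eq_transpose_of_trivial]
  exact posSemidef_conjTranspose_mul_self _

theorem IsVecColoring.stackScaled {t : ℝ} {d e : ℕ}
    {p : V → Fin d → ℝ} {q : V → Fin e → ℝ} (hp : IsVecColoring G t p) (hq : IsVecColoring G t q)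
    {a b : ℝ} (ha : 0 ≤ a) (hb : 0 ≤ b) (hab : a + b = 1) :
    IsVecColoring G t (stackScaled a b p q) := by
  refine ⟨fun i ↦ ?_, fun i j hij ↦ ?_⟩
  · rw [stackScaled_dotProduct ha hb, hp.1, hq.1, ← add_mul, hab, one_mul]
  · rw [stackScaled_dotProduct ha hb]
    nlinarith [hp.2 i j hij, hq.2 i j hij]

theorem IsOptGram.smul_add_smul {M N : Matrix V V ℝ} (hM : IsOptGram G M) (hN : IsOptGram G N)
    {a b : ℝ} (ha : 0 ≤ a) (hb : 0 ≤ b) (hab : a + b = 1) :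
    IsOptGram G (a • M + b • N) := by
  obtain ⟨d, p, hp, rfl⟩ := hM
  obtain ⟨e, q, hq, rfl⟩ := hN
  refine ⟨d + e, stackScaled a b p q, hp.stackScaled hq ha hb hab, ?_⟩
  ext i j
  simp [gramMat, stackScaled_dotProduct ha hb]

theorem IsOptGram.posSemidef {M : Matrix V V ℝ} (hM : IsOptGram G M) :
    M.PosSemidef := by
  obtain ⟨d, p, -, rfl⟩ := hM
  exact posSemidef_gramMat p

end VectorColoring

/-- A Gram matrix of an optimal vector coloring of maximum rank has
the largest image among Gram matrices of all optimal vector colorings. -/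
theorem image_le_of_max_rank {V : Type*} [Fintype V] (G : SimpleGraph V)
    (Mhat : Matrix V V ℝ) (h1 : IsOptGram G Mhat)
    (h2 : ∀ M : Matrix V V ℝ, IsOptGram G M → M.rank ≤ Mhat.rank) :
    ∀ M : Matrix V V ℝ, IsOptGram G M →
      LinearMap.range M.mulVecLin ≤ LinearMap.range Mhat.mulVecLin := by
  intro M hM
  set N : Matrix V V ℝ := (2⁻¹ : ℝ) • M + (2⁻¹ : ℝ) • Mhat
  have hN : IsOptGram G N := hM.smul_add_smul h1 (by norm_num) (by norm_num) (by norm_num)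
  have hker_N :
      LinearMap.ker N.mulVecLin = LinearMap.ker M.mulVecLin ⊓ LinearMap.ker Mhat.mulVecLin :=
    hM.posSemidef.ker_smul_add_smul h1.posSemidef (by norm_num) (by norm_num)
  have hker_eq : LinearMap.ker N.mulVecLin = LinearMap.ker Mhat.mulVecLin :=
    LinearMap.ker_eq_of_ker_le_of_finrank_range_le (hker_N ▸ inf_le_right) (h2 N hN)
  refine hM.posSemidef.isHermitian.range_mulVecLin_le_of_ker_le h1.posSemidef.isHermitian ?_
  rw [← hker_eq, hker_N]
  exact inf_le_left
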